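/- Let m ≥ 1 be an integer, γ ∈ (0, π/2), and p = (R sin ψ, R cos ψ) ∈ W_γ with R > 0 and π/2 − γ < ψ < π/2. There exists a closed (2m+1)-bounce billiard path based at p whose first bounce q₁ lies on the horizontal line ℓ₀ if and only if γ < π/(2m) and ψ > mγ; and there exists a closed (2m+1)-bounce billiard path based at p whose first bounce q₁ lies on ℓ_γ if and only if γ < π/(2m) and ψ < π − (m+1)γ. -/

import Mathlib

/-!
Unfold the path: reflecting the remainder of the path in the line of each bounce turns it into a
straight polygonal path. After a rotation by `mγ`, the `k`-th bounce point lands on the ray at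
angle `(m + 1 - k)γ`, while `p` and its final image lie at angles `±(π/2 - ψ + mγ)`. Seen from a
point off a line, the points of the line subtend an angle less than `π`, whence `mγ < ψ`.
Conversely, if `mγ < ψ`, the line `{x | x 0 = R sin (ψ - mγ)}` meets these rays in order, and
folding it back gives the path. Paths starting on `ℓ_γ` are the mirror images, in the bisector of
the wedge, of paths starting on `ℓ₀` based at the point with `ψ` replaced by `π - γ - ψ`.
-/

open Real

noncomputable section

/-- The Euclidean plane. -/
abbrev E2 := EuclideanSpace ℝ (Fin 2)

/-- Construct a point of the plane from its coordinates. -/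
def pt (x y : ℝ) : E2 := WithLp.toLp 2 ![x, y]

/-- The open wedge of opening angle `γ`, bounded by the horizontal line `{y = 0}`
and the line `{y = x·tan γ}`. -/
def wedge (γ : ℝ) : Set E2 := {p | 0 < p 0 ∧ 0 < p 1 ∧ p 1 < p 0 * Real.tan γ}

/-- A direction vector of the boundary line: the horizontal line if `horiz`, the
line `{y = x·tan γ}` otherwise. -/
def lineDir (γ : ℝ) (horiz : Bool) : E2 :=
  if horiz then pt 1 0 else pt (Real.cos γ) (Real.sin γ)

/-- Membership of the corresponding boundary line. -/
def onBoundary (γ : ℝ) (horiz : Bool) (p : E2) : Prop :=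
  if horiz then p 1 = 0 else p 1 = p 0 * Real.tan γ

/-- The linear reflection of `ℝ²` across the `1`-dimensional subspace spanned by `d`,
applied to `v` (for `d ≠ 0`). -/
def reflDir (d v : E2) : E2 :=
  (2 * (inner ℝ v d : ℝ) / (inner ℝ d d : ℝ)) • d - v

/-- A closed `n`-bounce billiard path based at the point `p` of the wedge `W_γ`:
a sequence `q 0 = p, q 1, …, q n, q (n+1) = p` with consecutive points distinct,
whose intermediate points lie alternately on the two boundary lines (minus the
vertex), whose open segments lie in the open wedge, and which satisfies the law
of reflection at each bounce. -/
structure ClosedBounce (γ : ℝ) (p : E2) (n : ℕ) where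
  q : ℕ → E2
  /-- `horiz k` records whether the `k`-th bounce is on the horizontal line `ℓ₀`. -/
  horiz : ℕ → Bool
  alt : ∀ k, 1 ≤ k → k < n → horiz (k + 1) = !horiz k
  start : q 0 = p
  closes : q (n + 1) = p
  distinct : ∀ k ≤ n, q k ≠ q (k + 1)
  bounce_ne_vertex : ∀ k, 1 ≤ k → k ≤ n → q k ≠ 0
  onLine : ∀ k, 1 ≤ k → k ≤ n → onBoundary γ (horiz k) (q k)
  segs_in_wedge : ∀ k ≤ n, ∀ t : ℝ, 0 < t → t < 1 →
    (1 - t) • q k + t • q (k + 1) ∈ wedge γ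
  reflects : ∀ k, 1 ≤ k → k ≤ n →
    (‖q (k + 1) - q k‖)⁻¹ • (q (k + 1) - q k) =
      reflDir (lineDir γ (horiz k)) ((‖q k - q (k - 1)‖)⁻¹ • (q k - q (k - 1)))

/-- The total length of a closed `n`-bounce billiard path. -/
def totalLength {γ : ℝ} {p : E2} {n : ℕ} (P : ClosedBounce γ p n) : ℝ :=
  ∑ k ∈ Finset.range (n + 1), ‖P.q (k + 1) - P.q k‖


open Set Filter Topology

@[simp] lemma pt_apply_zero (x y : ℝ) : pt x y 0 = x := rfl

@[simp] lemma pt_apply_one (x y : ℝ) : pt x y 1 = y := rfl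

namespace E2

@[ext] lemma ext {v w : E2} (h₀ : v 0 = w 0) (h₁ : v 1 = w 1) : v = w := by
  ext i; fin_cases i <;> assumption

lemma norm_eq (v : E2) : ‖v‖ = √(v 0 ^ 2 + v 1 ^ 2) := by
  simp [EuclideanSpace.norm_eq, Fin.sum_univ_two]

lemma inner_eq (v w : E2) : inner ℝ v w = v 0 * w 0 + v 1 * w 1 := by
  simp [PiLp.inner_apply, Fin.sum_univ_two]; ring

end E2

def angleVec (θ : ℝ) : E2 := pt (cos θ) (sin θ)

@[simp] lemma angleVec_apply_zero (θ : ℝ) : angleVec θ 0 = cos θ := rfl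

@[simp] lemma angleVec_apply_one (θ : ℝ) : angleVec θ 1 = sin θ := rfl

lemma norm_angleVec (θ : ℝ) : ‖angleVec θ‖ = 1 := by
  simp [E2.norm_eq]

lemma norm_smul_angleVec (a θ : ℝ) : ‖a • angleVec θ‖ = |a| := by
  rw [norm_smul, norm_angleVec, mul_one, Real.norm_eq_abs]

lemma pt_sin_cos (R ψ : ℝ) : pt (R * sin ψ) (R * cos ψ) = R • angleVec (π / 2 - ψ) := by
  ext <;> simp [angleVec, cos_pi_div_two_sub, sin_pi_div_two_sub]

lemma exists_eq_norm_smul_angleVec (v : E2) : ∃ τ, v = ‖v‖ • angleVec τ := by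
  set z : ℂ := ⟨v 0, v 1⟩
  have hz : ‖z‖ = ‖v‖ := by
    rw [Complex.norm_def, Complex.normSq_mk, E2.norm_eq]; ring_nf
  refine ⟨Complex.arg z, ?_⟩
  ext
  · simp [angleVec, ← hz, Complex.norm_mul_cos_arg, z]
  · simp [angleVec, ← hz, Complex.norm_mul_sin_arg, z]

lemma div_cos_smul_angleVec {θ : ℝ} (h : cos θ ≠ 0) (c : ℝ) :
    (c / cos θ) • angleVec θ = pt c (c * tan θ) := by
  ext <;> simp [tan_eq_sin_div_cos] <;> field_simp

def cross (v w : E2) : ℝ := v 0 * w 1 - v 1 * w 0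

lemma cross_angleVec (a b : ℝ) : cross (angleVec a) (angleVec b) = sin (b - a) := by
  simp [cross, sin_sub]; ring

lemma cross_smul_left (c : ℝ) (v w : E2) : cross (c • v) w = c * cross v w := by
  simp [cross]; ring

lemma cross_smul_right (c : ℝ) (v w : E2) : cross v (c • w) = c * cross v w := by
  simp [cross]; ring

lemma cross_add_smul_self (v w : E2) (c : ℝ) : cross (v + c • w) w = cross v w := by
  simp [cross]; ring

def rot (θ : ℝ) : E2 ≃ₗᵢ[ℝ] E2 where
  toFun w := pt (cos θ * w 0 - sin θ * w 1) (sin θ * w 0 + cos θ * w 1)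
  invFun w := pt (cos θ * w 0 + sin θ * w 1) (cos θ * w 1 - sin θ * w 0)
  map_add' v w := by ext <;> simp <;> ring
  map_smul' c v := by ext <;> simp <;> ring
  left_inv w := by
    ext
    · simp; linear_combination (w 0) * sin_sq_add_cos_sq θ
    · simp; linear_combination (w 1) * sin_sq_add_cos_sq θ
  right_inv w := by
    ext
    · simp; linear_combination (w 0) * sin_sq_add_cos_sq θ
    · simp; linear_combination (w 1) * sin_sq_add_cos_sq θ
  norm_map' w := by
    simp only [LinearEquiv.coe_mk, LinearMap.coe_mk, AddHom.coe_mk, E2.norm_eq,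
      pt_apply_zero, pt_apply_one]
    congr 1
    linear_combination (w 0 ^ 2 + w 1 ^ 2) * sin_sq_add_cos_sq θ

def conjX : E2 ≃ₗᵢ[ℝ] E2 where
  toFun w := pt (w 0) (-w 1)
  invFun w := pt (w 0) (-w 1)
  map_add' v w := by ext <;> simp [add_comm]
  map_smul' c v := by ext <;> simp
  left_inv w := by ext <;> simp
  right_inv w := by ext <;> simp
  norm_map' w := by simp [E2.norm_eq]

/-- The reflection across the line through the origin at angle `θ`. -/
def mirror (θ : ℝ) : E2 ≃ₗᵢ[ℝ] E2 := conjX.trans (rot (2 * θ))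

lemma rot_apply (θ : ℝ) (w : E2) :
    rot θ w = pt (cos θ * w 0 - sin θ * w 1) (sin θ * w 0 + cos θ * w 1) := rfl

lemma mirror_apply (θ : ℝ) (w : E2) :
    mirror θ w = pt (cos (2 * θ) * w 0 + sin (2 * θ) * w 1)
      (sin (2 * θ) * w 0 - cos (2 * θ) * w 1) := by
  ext <;> simp [mirror, rot_apply, conjX]; ring

lemma rot_angleVec (a θ : ℝ) : rot a (angleVec θ) = angleVec (θ + a) := by
  ext <;> simp [rot_apply, cos_add, sin_add] <;> ring

lemma mirror_angleVec (a θ : ℝ) : mirror a (angleVec θ) = angleVec (2 * a - θ) := by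
  ext <;> simp [mirror_apply, cos_sub, sin_sub]

lemma mirror_mirror (a b : ℝ) (v : E2) : mirror a (mirror b v) = rot (2 * (a - b)) v := by
  ext <;> simp [mirror_apply, rot_apply, mul_sub, cos_sub, sin_sub] <;> ring

lemma mirror_mirror_self (a : ℝ) (v : E2) : mirror a (mirror a v) = v := by
  ext <;> simp [mirror_mirror, rot_apply]

lemma rot_mirror (a b : ℝ) (v : E2) : rot a (mirror b v) = mirror (b + a / 2) v := by
  ext <;> simp [mirror_apply, rot_apply, mul_add, cos_add, sin_add] <;> ring_nf

lemma reflDir_angleVec (θ : ℝ) (v : E2) : reflDir (angleVec θ) v = mirror θ v := by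
  simp only [reflDir, E2.inner_eq, angleVec_apply_zero, angleVec_apply_one]
  rw [← sq, ← sq, cos_sq_add_sin_sq, div_one]
  ext
  · simp [mirror_apply, angleVec, cos_two_mul, sin_two_mul]; ring
  · simp [mirror_apply, angleVec, cos_two_mul, sin_two_mul]
    linear_combination (2 * v 1) * sin_sq_add_cos_sq θ


lemma mem_Ioo_of_sin_pos {y : ℝ} (hy : 0 < sin y) (h₁ : -π < y) (h₂ : y < 2 * π) :
    y ∈ Ioo 0 π := by
  by_contra h
  rw [mem_Ioo, not_and_or, not_lt, not_lt] at h
  rcases h with h | h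
  · linarith [sin_nonpos_of_nonpos_of_neg_pi_le h h₁.le]
  · have := sin_nonpos_of_nonpos_of_neg_pi_le (x := y - 2 * π) (by linarith) (by linarith)
    rw [sin_sub_two_pi] at this
    linarith

/-- A sequence of angles with positive sines and jumps smaller than `π` stays inside one interval
`(2πn, 2πn + π)`. -/
lemma abs_sub_lt_pi_of_sin_pos {x : ℕ → ℝ} {N : ℕ} (hsin : ∀ k ≤ N, 0 < sin (x k))
    (hstep : ∀ k < N, |x (k + 1) - x k| < π) : |x N - x 0| < π := by
  set n := toIcoDiv two_pi_pos 0 (x 0)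
  have hsin' : ∀ k ≤ N, 0 < sin (x k - n * (2 * π)) := fun k hk => by
    rw [sin_sub_int_mul_two_pi]; exact hsin k hk
  have hin : ∀ k ≤ N, x k - n * (2 * π) ∈ Ioo 0 π := by
    intro k hk
    induction k with
    | zero =>
      have h := toIcoMod_mem_Ico two_pi_pos 0 (x 0)
      rw [← self_sub_toIcoDiv_zsmul, zsmul_eq_mul] at h
      exact mem_Ioo_of_sin_pos (hsin' 0 hk) (by linarith [h.1, pi_pos]) (by linarith [h.2])
    | succ k ih =>
      have h := ih (by omega)
      have hs := abs_lt.mp (hstep k (by omega))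
      exact mem_Ioo_of_sin_pos (hsin' _ hk) (by linarith [h.1]) (by linarith [h.2])
  have h₀ := hin 0 (Nat.zero_le N)
  have h₁ := hin N le_rfl
  exact abs_lt.mpr ⟨by linarith [h₀.2, h₁.1], by linarith [h₀.1, h₁.2]⟩

lemma abs_sub_lt_pi_of_cross_pos {w : E2} {θ : ℕ → ℝ} {N : ℕ}
    (hpos : ∀ k ≤ N, 0 < cross (angleVec (θ k)) w) (hstep : ∀ k < N, |θ (k + 1) - θ k| < π) :
    |θ N - θ 0| < π := by
  obtain ⟨τ, hτ⟩ := exists_eq_norm_smul_angleVec w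
  have hsin : ∀ k ≤ N, 0 < sin (τ - θ k) := fun k hk => by
    have h := hpos k hk
    rw [hτ, cross_smul_right, cross_angleVec] at h
    exact pos_of_mul_pos_right h (norm_nonneg w)
  have h := abs_sub_lt_pi_of_sin_pos (x := fun k => τ - θ k) hsin fun k hk => by
    rw [show τ - θ (k + 1) - (τ - θ k) = -(θ (k + 1) - θ k) by ring, abs_neg]
    exact hstep k hk
  rwa [show τ - θ N - (τ - θ 0) = -(θ N - θ 0) by ring, abs_neg] at h

/-- The first step turns, so the line misses the origin and all vertices lie in one open
half-plane bounded by a line through the origin. -/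
lemma sub_lt_pi_of_vertices_on_line {Q : ℕ → E2} {r θ : ℕ → ℝ} {w : E2} {N : ℕ}
    (hQ : ∀ k ≤ N, Q k = r k • angleVec (θ k)) (hr : ∀ k ≤ N, 0 < r k)
    (hline : ∀ k < N, ∃ l : ℝ, Q (k + 1) = Q k + l • w)
    (hstep : ∀ k < N, θ (k + 1) - θ k ∈ Ioo (-π) 0) : θ 0 - θ N < π := by
  rcases Nat.eq_zero_or_pos N with rfl | hN
  · simpa using pi_pos
  set κ := cross (Q 0) w
  have hκ : ∀ k ≤ N, cross (Q k) w = κ := by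
    intro k hk
    induction k with
    | zero => rfl
    | succ k ih =>
      obtain ⟨l, hl⟩ := hline k hk
      rw [hl, cross_add_smul_self, ih (by omega)]
  have hκ0 : κ ≠ 0 := by
    intro h0
    obtain ⟨l, hl⟩ := hline 0 hN
    have h01 : cross (Q 0) (Q 1) = l * κ := by
      rw [hl]; simp only [κ, cross, PiLp.add_apply, PiLp.smul_apply, smul_eq_mul]; ring
    have hsin : sin (θ 1 - θ 0) < 0 :=
      sin_neg_of_neg_of_neg_pi_lt (hstep 0 hN).2 (hstep 0 hN).1
    rw [hQ 0 (Nat.zero_le N), hQ 1 hN, cross_smul_left, cross_smul_right, cross_angleVec,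
      h0, mul_zero] at h01
    nlinarith [mul_pos (hr 0 (Nat.zero_le N)) (hr 1 hN)]
  have hpos : ∀ k ≤ N, 0 < cross (angleVec (θ k)) (κ • w) := fun k hk => by
    have h := hκ k hk
    rw [hQ k hk, cross_smul_left] at h
    refine pos_of_mul_pos_right (a := r k) ?_ (hr k hk).le
    rw [cross_smul_right, mul_left_comm, h]
    exact mul_self_pos.mpr hκ0
  have h := abs_sub_lt_pi_of_cross_pos hpos fun k hk =>
    abs_lt.mpr ⟨(hstep k hk).1, (hstep k hk).2.trans pi_pos⟩
  linarith [neg_abs_le (θ N - θ 0)]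

def lineAngle (γ : ℝ) (horiz : Bool) : ℝ := if horiz then 0 else γ

lemma lineDir_eq_angleVec (γ : ℝ) (horiz : Bool) :
    lineDir γ horiz = angleVec (lineAngle γ horiz) := by
  cases horiz <;> ext <;> simp [lineDir, lineAngle, angleVec]

lemma onBoundary_iff {γ : ℝ} (hγ : cos γ ≠ 0) {horiz : Bool} {x : E2} :
    onBoundary γ horiz x ↔ ∃ a : ℝ, x = a • angleVec (lineAngle γ horiz) := by
  cases horiz
  · simp only [onBoundary, lineAngle, Bool.false_eq_true, if_false, tan_eq_sin_div_cos]
    constructor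
    · intro hx
      refine ⟨x 0 / cos γ, ?_⟩
      ext <;> simp [hx] <;> field_simp
    · rintro ⟨a, rfl⟩
      simp; field_simp
  · simp only [onBoundary, lineAngle, if_true]
    constructor
    · intro hx
      exact ⟨x 0, by ext <;> simp [hx]⟩
    · rintro ⟨a, rfl⟩
      simp

lemma mem_wedge_iff {γ : ℝ} (hγ0 : 0 < γ) (hγ1 : γ < π / 2) {x : E2} :
    x ∈ wedge γ ↔ 0 < cross (angleVec 0) x ∧ 0 < cross x (angleVec γ) := by
  have hcos : 0 < cos γ := cos_pos_of_mem_Ioo ⟨by linarith, hγ1⟩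
  have hsin : 0 < sin γ := sin_pos_of_pos_of_lt_pi hγ0 (by linarith)
  simp only [wedge, cross, angleVec_apply_zero, angleVec_apply_one, cos_zero,
    sin_zero, tan_eq_sin_div_cos, ← mul_div_assoc, lt_div_iff₀ hcos]
  constructor
  · rintro ⟨-, h₁, h₂⟩
    constructor <;> linarith
  · rintro ⟨h₁, h₂⟩
    refine ⟨?_, by linarith, by linarith⟩
    by_contra h
    nlinarith [mul_pos h₁ hcos]

lemma cross_segment_left (u x y : E2) (t : ℝ) :
    cross u ((1 - t) • x + t • y) = (1 - t) * cross u x + t * cross u y := by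
  simp only [cross, PiLp.add_apply, PiLp.smul_apply, smul_eq_mul]; ring

lemma cross_segment_right (u x y : E2) (t : ℝ) :
    cross ((1 - t) • x + t • y) u = (1 - t) * cross x u + t * cross y u := by
  simp only [cross, PiLp.add_apply, PiLp.smul_apply, smul_eq_mul]; ring

lemma sin_convex_comb_pos {a b r s t : ℝ} (ha : a ∈ Ico 0 π) (hb : b ∈ Ico 0 π) (hab : a ≠ b)
    (hr : 0 < r) (hs : 0 < s) (ht : t ∈ Ioo 0 1) : 0 < (1 - t) * (r * sin a) + t * (s * sin b) := by
  have hsa := sin_nonneg_of_nonneg_of_le_pi ha.1 ha.2.le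
  have hsb := sin_nonneg_of_nonneg_of_le_pi hb.1 hb.2.le
  have h1t : 0 < 1 - t := by linarith [ht.2]
  rcases ha.1.eq_or_lt with rfl | ha0
  · have := sin_pos_of_pos_of_lt_pi (hb.1.lt_of_ne hab) hb.2
    have := ht.1
    positivity
  · have := sin_pos_of_pos_of_lt_pi ha0 ha.2
    nlinarith [mul_pos h1t (mul_pos hr this), mul_nonneg ht.1.le (mul_nonneg hs.le hsb)]

lemma segment_mem_wedge {γ : ℝ} (hγ0 : 0 < γ) (hγ1 : γ < π / 2) {r s φ φ' t : ℝ}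
    (hr : 0 < r) (hs : 0 < s) (hφ : φ ∈ Icc 0 γ) (hφ' : φ' ∈ Icc 0 γ) (hne : φ ≠ φ')
    (ht : t ∈ Ioo 0 1) : (1 - t) • (r • angleVec φ) + t • (s • angleVec φ') ∈ wedge γ := by
  have hIco : ∀ {a}, a ∈ Icc 0 γ → a ∈ Ico 0 π := fun h => ⟨h.1, by linarith [h.2]⟩
  have hIco' : ∀ {a}, a ∈ Icc 0 γ → γ - a ∈ Ico 0 π :=
    fun h => ⟨by linarith [h.2], by linarith [h.1]⟩
  rw [mem_wedge_iff hγ0 hγ1, cross_segment_left, cross_segment_right]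
  simp only [cross_smul_left, cross_smul_right, cross_angleVec, sub_zero]
  exact ⟨sin_convex_comb_pos (hIco hφ) (hIco hφ') hne hr hs ht,
    sin_convex_comb_pos (hIco' hφ) (hIco' hφ') (by contrapose! hne; linarith) hr hs ht⟩

lemma nonneg_of_forall_convex_comb_pos {a b : ℝ}
    (h : ∀ t ∈ Ioo (0 : ℝ) 1, 0 < (1 - t) * a + t * b) : 0 ≤ a := by
  have hlim : Tendsto (fun t : ℝ => (1 - t) * a + t * b) (𝓝[>] 0) (𝓝 a) := by
    have hc : Continuous fun t : ℝ => (1 - t) * a + t * b := by fun_prop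
    simpa using hc.continuousWithinAt (s := Ioi 0) (x := 0) |>.tendsto
  exact ge_of_tendsto hlim (by
    filter_upwards [Ioo_mem_nhdsGT one_pos] with t ht using (h t ht).le)

lemma pos_of_segment_mem_wedge {γ : ℝ} (hγ0 : 0 < γ) (hγ1 : γ < π / 2) {horiz : Bool} {a : ℝ}
    {y : E2} (ha : a ≠ 0)
    (hseg : ∀ t ∈ Ioo (0 : ℝ) 1, (1 - t) • (a • angleVec (lineAngle γ horiz)) + t • y ∈ wedge γ) :
    0 < a := by
  have hsin : 0 < sin γ := sin_pos_of_pos_of_lt_pi hγ0 (by linarith)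
  have hcross : ∀ t ∈ Ioo (0 : ℝ) 1, _ := fun t ht => (mem_wedge_iff hγ0 hγ1).mp (hseg t ht)
  suffices 0 ≤ a * sin γ from (ha.symm.lt_of_le (nonneg_of_mul_nonneg_left this hsin))
  cases horiz
  · refine nonneg_of_forall_convex_comb_pos (b := cross (angleVec 0) y) fun t ht => ?_
    have := (hcross t ht).1
    rwa [cross_segment_left, cross_smul_right, cross_angleVec, lineAngle, if_neg (by simp),
      sub_zero] at this
  · refine nonneg_of_forall_convex_comb_pos (b := cross y (angleVec γ)) fun t ht => ?_
    have := (hcross t ht).2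
    rwa [cross_segment_right, cross_smul_left, cross_angleVec, lineAngle, if_pos rfl,
      sub_zero] at this

lemma mirror_half_angleVec_lineAngle (γ : ℝ) (horiz : Bool) :
    mirror (γ / 2) (angleVec (lineAngle γ horiz)) = angleVec (lineAngle γ (!horiz)) := by
  rw [mirror_angleVec]
  cases horiz <;> simp only [lineAngle] <;> norm_num <;> ring_nf

lemma mirror_half_mem_wedge {γ : ℝ} (hγ0 : 0 < γ) (hγ1 : γ < π / 2) {x : E2}
    (hx : x ∈ wedge γ) : mirror (γ / 2) x ∈ wedge γ := by
  rw [mem_wedge_iff hγ0 hγ1] at hx ⊢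
  simp only [cross, mirror_apply, angleVec_apply_zero, angleVec_apply_one, pt_apply_zero,
    pt_apply_one, cos_zero, sin_zero, show 2 * (γ / 2) = γ by ring] at hx ⊢
  constructor
  · linarith [hx.2]
  · linear_combination hx.1 - (x 1) * sin_sq_add_cos_sq γ

lemma onBoundary_mirror_half {γ : ℝ} (hγ : cos γ ≠ 0) {horiz : Bool} {x : E2}
    (hx : onBoundary γ horiz x) : onBoundary γ (!horiz) (mirror (γ / 2) x) := by
  obtain ⟨a, rfl⟩ := (onBoundary_iff hγ).mp hx
  exact (onBoundary_iff hγ).mpr ⟨a, by rw [map_smul, mirror_half_angleVec_lineAngle]⟩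

lemma reflDir_lineDir_mirror_half (γ : ℝ) (horiz : Bool) (v : E2) :
    reflDir (lineDir γ (!horiz)) (mirror (γ / 2) v) =
      mirror (γ / 2) (reflDir (lineDir γ horiz) v) := by
  simp only [lineDir_eq_angleVec, reflDir_angleVec, mirror_mirror]
  cases horiz <;> simp only [lineAngle] <;> norm_num <;> ring_nf

theorem ClosedBounce.exists_mirror {γ : ℝ} (hγ0 : 0 < γ) (hγ1 : γ < π / 2) {p : E2} {n : ℕ}
    (P : ClosedBounce γ p n) :
    ∃ P' : ClosedBounce γ (mirror (γ / 2) p) n, P'.horiz 1 = !P.horiz 1 := by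
  have hcos : cos γ ≠ 0 := (cos_pos_of_mem_Ioo ⟨by linarith, hγ1⟩).ne'
  refine ⟨{ q := fun k => mirror (γ / 2) (P.q k), horiz := fun k => !P.horiz k,
            alt := fun k h1 h2 => by rw [P.alt k h1 h2]
            start := by rw [P.start]
            closes := by rw [P.closes]
            distinct := fun k hk => (mirror (γ / 2)).injective.ne (P.distinct k hk)
            bounce_ne_vertex := fun k h1 h2 => by simpa using P.bounce_ne_vertex k h1 h2
            onLine := fun k h1 h2 => onBoundary_mirror_half hcos (P.onLine k h1 h2)
            segs_in_wedge := fun k hk t ht0 ht1 => by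
              rw [← map_smul, ← map_smul, ← map_add]
              exact mirror_half_mem_wedge hγ0 hγ1 (P.segs_in_wedge k hk t ht0 ht1)
            reflects := fun k h1 h2 => by
              simp only [← map_sub, LinearIsometryEquiv.norm_map, ← map_smul,
                reflDir_lineDir_mirror_half]
              rw [P.reflects k h1 h2] }, rfl⟩

theorem exists_horiz_false_iff {γ : ℝ} (hγ0 : 0 < γ) (hγ1 : γ < π / 2) {p : E2} {n : ℕ} :
    (∃ P : ClosedBounce γ p n, P.horiz 1 = false) ↔
      ∃ P : ClosedBounce γ (mirror (γ / 2) p) n, P.horiz 1 = true := by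
  constructor
  · rintro ⟨P, hP⟩
    obtain ⟨P', hP'⟩ := P.exists_mirror hγ0 hγ1
    exact ⟨P', by rw [hP', hP]; rfl⟩
  · rintro ⟨P, hP⟩
    have h := P.exists_mirror hγ0 hγ1
    rw [mirror_mirror_self] at h
    obtain ⟨P', hP'⟩ := h
    exact ⟨P', by rw [hP', hP]; rfl⟩

section Unfolding

variable {V : Type*} [NormedAddCommGroup V] [NormedSpace ℝ V]

lemma LinearIsometryEquiv.apply_inv_norm_smul (e : V ≃ₗᵢ[ℝ] V) (v : V) :
    e (‖v‖⁻¹ • v) = ‖e v‖⁻¹ • e v := by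
  rw [map_smul, e.norm_map]

/-- The unfolding principle for a single bounce. -/
lemma inv_norm_smul_eq_apply_iff {R H₀ H₁ : V ≃ₗᵢ[ℝ] V} (hR : ∀ v, R (R v) = v)
    (hH : ∀ v, H₁ v = H₀ (R v)) (s s' : V) :
    ‖s‖⁻¹ • s = R (‖s'‖⁻¹ • s') ↔ ‖H₁ s‖⁻¹ • H₁ s = ‖H₀ s'‖⁻¹ • H₀ s' := by
  rw [← H₁.apply_inv_norm_smul, ← H₀.apply_inv_norm_smul, hH, H₀.injective.eq_iff]
  constructor
  · intro h; rw [h, hR]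
  · intro h; rw [← h, hR]

lemma norm_smul_inv_norm_smul_self (v : V) : ‖v‖ • (‖v‖⁻¹ • v) = v := by
  rcases eq_or_ne v 0 with rfl | hv
  · simp
  · exact smul_inv_smul₀ (norm_ne_zero_iff.mpr hv) v

end Unfolding

/-- `rot (mγ) ∘ R₁ ∘ ⋯ ∘ R_k`, where `R_j` is the mirror in the line of the `j`-th bounce: `ℓ₀` for
odd `j`, `ℓ_γ` for even `j`. The rotation by `mγ` makes the unfolded path vertical. -/
def unfoldMap (m : ℕ) (γ : ℝ) (k : ℕ) : E2 ≃ₗᵢ[ℝ] E2 :=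
  if Even k then rot ((m - k) * γ) else mirror ((m + 1 - k) * γ / 2)

lemma unfoldMap_succ_apply (m : ℕ) (γ : ℝ) (k : ℕ) (v : E2) :
    unfoldMap m γ (k + 1) v = unfoldMap m γ k (mirror (lineAngle γ (decide (Odd (k + 1)))) v) := by
  rcases Nat.even_or_odd k with hk | hk
  · have hk' : Odd (k + 1) := hk.add_one
    simp only [unfoldMap, hk, hk', Nat.not_even_iff_odd.mpr hk', if_true, if_false,
      decide_true, lineAngle, rot_mirror]
    congr 2; push_cast; ring
  · have hk' : Even (k + 1) := hk.add_one
    simp only [unfoldMap, hk', Nat.not_even_iff_odd.mpr hk, Nat.not_odd_iff_even.mpr hk',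
      if_true, if_false, decide_false, lineAngle, mirror_mirror, Bool.false_eq_true]
    congr 2; push_cast; ring

/-- The polar angle of the `k`-th vertex of the path, `q₀ = q_{2m+2} = p`. -/
def vertexAngle (m : ℕ) (γ ψ : ℝ) (k : ℕ) : ℝ :=
  if k = 0 ∨ k = 2 * m + 2 then π / 2 - ψ else lineAngle γ (decide (Odd k))

/-- The polar angle of the `k`-th vertex of the unfolded path. -/
def unfoldedAngle (m : ℕ) (γ ψ : ℝ) (k : ℕ) : ℝ :=
  if k = 0 then π / 2 - ψ + m * γ
  else if k = 2 * m + 2 then -(π / 2 - ψ + m * γ) else (m + 1 - k) * γ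

lemma unfoldMap_angleVec_vertexAngle {m : ℕ} {γ ψ : ℝ} {k : ℕ} (hk : k ≤ 2 * m + 1) :
    unfoldMap m γ k (angleVec (vertexAngle m γ ψ k)) = angleVec (unfoldedAngle m γ ψ k) := by
  rcases Nat.eq_zero_or_pos k with rfl | hk0
  · simp [unfoldMap, vertexAngle, unfoldedAngle, rot_angleVec]
  have hne : ¬(k = 0 ∨ k = 2 * m + 2) := by omega
  rw [vertexAngle, if_neg hne]
  simp only [unfoldMap, unfoldedAngle, if_false, hk0.ne', lineAngle,
    show k ≠ 2 * m + 2 by omega]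
  rcases Nat.even_or_odd k with he | ho
  · simp only [he, Nat.not_odd_iff_even.mpr he, if_true, decide_false, if_false,
      rot_angleVec, Bool.false_eq_true]
    congr 1; ring
  · simp only [ho, Nat.not_even_iff_odd.mpr ho, if_true, decide_true, if_false, mirror_angleVec]
    congr 1; ring

lemma unfoldMap_angleVec_vertexAngle_succ {m : ℕ} {γ ψ : ℝ} {k : ℕ} (hk : k ≤ 2 * m + 1) :
    unfoldMap m γ k (angleVec (vertexAngle m γ ψ (k + 1))) =
      angleVec (unfoldedAngle m γ ψ (k + 1)) := by
  rcases eq_or_lt_of_le hk with rfl | hlt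
  · have ho : ¬Even (2 * m + 1) := by simp
    simp only [unfoldMap, vertexAngle, unfoldedAngle, ho, if_false, mirror_angleVec]
    simp only [show 2 * m + 1 + 1 = 2 * m + 2 by ring, or_true, if_true,
      show 2 * m + 2 ≠ 0 by omega, if_false]
    congr 1; push_cast; ring
  have hne : ¬(k + 1 = 0 ∨ k + 1 = 2 * m + 2) := by omega
  rw [vertexAngle, if_neg hne]
  simp only [unfoldMap, unfoldedAngle, if_false, lineAngle,
    show k + 1 ≠ 0 by omega, show k + 1 ≠ 2 * m + 2 by omega]
  rcases Nat.even_or_odd k with he | ho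
  · simp only [he, he.add_one, if_true, decide_true, rot_angleVec]
    congr 1; push_cast; ring
  · simp only [Nat.not_even_iff_odd.mpr ho, Nat.not_odd_iff_even.mpr ho.add_one, if_false,
      decide_false, mirror_angleVec, Bool.false_eq_true]
    congr 1; push_cast; ring

lemma reflects_iff_unfoldMap (m : ℕ) (γ : ℝ) (q : ℕ → E2) (k : ℕ) :
    ‖q (k + 1 + 1) - q (k + 1)‖⁻¹ • (q (k + 1 + 1) - q (k + 1)) =
        reflDir (lineDir γ (decide (Odd (k + 1)))) (‖q (k + 1) - q k‖⁻¹ • (q (k + 1) - q k)) ↔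
      ‖unfoldMap m γ (k + 1) (q (k + 1 + 1) - q (k + 1))‖⁻¹ •
          unfoldMap m γ (k + 1) (q (k + 1 + 1) - q (k + 1)) =
        ‖unfoldMap m γ k (q (k + 1) - q k)‖⁻¹ • unfoldMap m γ k (q (k + 1) - q k) := by
  rw [lineDir_eq_angleVec, reflDir_angleVec]
  exact inv_norm_smul_eq_apply_iff (mirror_mirror_self _) (unfoldMap_succ_apply m γ k) _ _

lemma unfoldMap_sub_eq {m : ℕ} {γ ψ : ℝ} {r : ℕ → ℝ} {q : ℕ → E2}
    (hq : ∀ k ≤ 2 * m + 2, q k = r k • angleVec (vertexAngle m γ ψ k)) {k : ℕ}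
    (hk : k ≤ 2 * m + 1) :
    unfoldMap m γ k (q (k + 1) - q k) =
      r (k + 1) • angleVec (unfoldedAngle m γ ψ (k + 1)) -
        r k • angleVec (unfoldedAngle m γ ψ k) := by
  rw [map_sub, hq (k + 1) (by omega), hq k (by omega), map_smul, map_smul,
    unfoldMap_angleVec_vertexAngle_succ hk, unfoldMap_angleVec_vertexAngle hk]

lemma unfoldedAngle_succ_sub_mem {m : ℕ} {γ ψ : ℝ} (hγ0 : 0 < γ) (hγ1 : γ < π / 2)
    (hψ1 : π / 2 - γ < ψ) (hψ2 : ψ < π / 2) {k : ℕ} (hk : k ≤ 2 * m + 1) :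
    unfoldedAngle m γ ψ (k + 1) - unfoldedAngle m γ ψ k ∈ Ioo (-π) 0 := by
  have hstep : unfoldedAngle m γ ψ (k + 1) - unfoldedAngle m γ ψ k = ψ - π / 2 ∨
      unfoldedAngle m γ ψ (k + 1) - unfoldedAngle m γ ψ k = -γ := by
    rcases Nat.eq_zero_or_pos k with rfl | hk0
    · left; simp [unfoldedAngle]
    rcases eq_or_lt_of_le hk with rfl | hlt
    · left
      simp only [unfoldedAngle, show 2 * m + 1 + 1 = 2 * m + 2 by ring, if_true,
        show 2 * m + 2 ≠ 0 by omega, show 2 * m + 1 ≠ 0 by omega,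
        show 2 * m + 1 ≠ 2 * m + 2 by omega, if_false]
      push_cast; ring
    · right
      simp only [unfoldedAngle, show k + 1 ≠ 0 by omega, show k + 1 ≠ 2 * m + 2 by omega,
        hk0.ne', show k ≠ 2 * m + 2 by omega, if_false]
      push_cast; ring
  rcases hstep with h | h <;> rw [h] <;> constructor <;> linarith [pi_pos]

theorem ClosedBounce.horiz_eq_odd {γ : ℝ} {p : E2} {n : ℕ} (P : ClosedBounce γ p n)
    (h1 : P.horiz 1 = true) {k : ℕ} (hk1 : 1 ≤ k) (hkn : k ≤ n) :
    P.horiz k = decide (Odd k) := by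
  induction k with
  | zero => omega
  | succ k ih =>
    rcases Nat.eq_zero_or_pos k with rfl | hk0
    · simpa using h1
    · rw [P.alt k hk0 (by omega), ih hk0 (by omega)]
      simp only [Nat.odd_add_one, decide_not]

theorem ClosedBounce.eq_norm_smul_angleVec_vertexAngle {m : ℕ} {γ R ψ : ℝ} (hγ0 : 0 < γ)
    (hγ1 : γ < π / 2) (hR : 0 < R) (P : ClosedBounce γ (R • angleVec (π / 2 - ψ)) (2 * m + 1))
    (h1 : P.horiz 1 = true) {k : ℕ} (hk : k ≤ 2 * m + 2) :
    P.q k = ‖P.q k‖ • angleVec (vertexAngle m γ ψ k) ∧ 0 < ‖P.q k‖ := by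
  by_cases hp : k = 0 ∨ k = 2 * m + 2
  · have hq : P.q k = R • angleVec (π / 2 - ψ) := by
      rcases hp with rfl | rfl
      exacts [P.start, P.closes]
    rw [hq, norm_smul_angleVec, abs_of_pos hR, vertexAngle, if_pos hp]
    exact ⟨rfl, hR⟩
  have hk1 : 1 ≤ k := by omega
  have hkn : k ≤ 2 * m + 1 := by omega
  have hcos : cos γ ≠ 0 := (cos_pos_of_mem_Ioo ⟨by linarith, hγ1⟩).ne'
  rw [vertexAngle, if_neg hp, ← P.horiz_eq_odd h1 hk1 hkn]
  obtain ⟨a, ha⟩ := (onBoundary_iff hcos).mp (P.onLine k hk1 hkn)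
  have ha0 : a ≠ 0 := by
    rintro rfl
    exact P.bounce_ne_vertex k hk1 hkn (by simpa using ha)
  have hapos : 0 < a := pos_of_segment_mem_wedge hγ0 hγ1 ha0 fun t ht => by
    rw [← ha]; exact P.segs_in_wedge k hkn t ht.1 ht.2
  rw [ha, norm_smul_angleVec, abs_of_pos hapos]
  exact ⟨rfl, hapos⟩

/-- Unfolding turns the path into a straight one through vertices at the polar angles
`unfoldedAngle`; since these turn by `2 (π/2 - ψ + mγ)` in total, this must be less than `π`. -/
theorem ClosedBounce.lt_of_horiz_one_eq_true {m : ℕ} {γ R ψ : ℝ} (hγ0 : 0 < γ)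
    (hγ1 : γ < π / 2) (hR : 0 < R) (hψ1 : π / 2 - γ < ψ) (hψ2 : ψ < π / 2)
    (P : ClosedBounce γ (R • angleVec (π / 2 - ψ)) (2 * m + 1)) (h1 : P.horiz 1 = true) :
    m * γ < ψ := by
  have hq := fun k (hk : k ≤ 2 * m + 2) =>
    P.eq_norm_smul_angleVec_vertexAngle hγ0 hγ1 hR h1 hk
  set Q : ℕ → E2 := fun k => ‖P.q k‖ • angleVec (unfoldedAngle m γ ψ k)
  have hseg : ∀ k ≤ 2 * m + 1, unfoldMap m γ k (P.q (k + 1) - P.q k) = Q (k + 1) - Q k :=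
    fun k hk => unfoldMap_sub_eq (fun j hj => (hq j hj).1) hk
  set w := ‖Q 1 - Q 0‖⁻¹ • (Q 1 - Q 0)
  have hdir : ∀ k ≤ 2 * m + 1, ‖Q (k + 1) - Q k‖⁻¹ • (Q (k + 1) - Q k) = w := by
    intro k hk
    induction k with
    | zero => rfl
    | succ k ih =>
      rw [← ih (by omega), ← hseg (k + 1) hk, ← hseg k (by omega)]
      refine (reflects_iff_unfoldMap m γ P.q k).mp ?_
      have h := P.reflects (k + 1) (by omega) hk
      rwa [P.horiz_eq_odd h1 (by omega) hk, Nat.add_sub_cancel] at h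
  have hline : ∀ k < 2 * m + 2, ∃ l : ℝ, Q (k + 1) = Q k + l • w := fun k hk =>
    ⟨‖Q (k + 1) - Q k‖, by rw [← hdir k (by omega), norm_smul_inv_norm_smul_self]; abel⟩
  have h := sub_lt_pi_of_vertices_on_line (fun k _ => rfl) (fun k hk => (hq k hk).2) hline
    fun k hk => unfoldedAngle_succ_sub_mem hγ0 hγ1 hψ1 hψ2 (by omega)
  simp only [unfoldedAngle, if_true, show 2 * m + 2 ≠ 0 by omega, if_false] at h
  linarith

lemma unfoldedAngle_mem_Ioo {m : ℕ} {γ ψ : ℝ} (hγ0 : 0 < γ) (hψ2 : ψ < π / 2)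
    (hmγ : m * γ < ψ) {k : ℕ} (hk : k ≤ 2 * m + 2) :
    unfoldedAngle m γ ψ k ∈ Ioo (-(π / 2)) (π / 2) := by
  have hm0 : (0 : ℝ) ≤ m * γ := by positivity
  unfold unfoldedAngle
  split_ifs with h0 hN
  · constructor <;> linarith
  · constructor <;> linarith
  · have hk1 : (1 : ℝ) ≤ k := by exact_mod_cast (by omega : 1 ≤ k)
    have hk2 : (k : ℝ) ≤ 2 * m + 1 := by exact_mod_cast (by omega : k ≤ 2 * m + 1)
    constructor <;> nlinarith

lemma vertexAngle_mem_Icc {m : ℕ} {γ ψ : ℝ} (hγ0 : 0 < γ) (hψ1 : π / 2 - γ < ψ)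
    (hψ2 : ψ < π / 2) (k : ℕ) : vertexAngle m γ ψ k ∈ Icc 0 γ := by
  unfold vertexAngle lineAngle
  split_ifs <;> constructor <;> linarith

lemma vertexAngle_succ_ne {m : ℕ} {γ ψ : ℝ} (hγ0 : 0 < γ) (hψ2 : ψ < π / 2) {k : ℕ}
    (hk : k ≤ 2 * m + 1) :
    vertexAngle m γ ψ k ≠ vertexAngle m γ ψ (k + 1) := by
  rcases Nat.eq_zero_or_pos k with rfl | hk0
  · simp only [vertexAngle, lineAngle, true_or, if_true, zero_add, one_ne_zero, false_or,
      show 1 ≠ 2 * m + 2 by omega, if_false, odd_one, decide_true]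
    linarith
  rcases eq_or_lt_of_le hk with rfl | hlt
  · have ho : Odd (2 * m + 1) := odd_two_mul_add_one m
    simp only [vertexAngle, lineAngle, ho, decide_true, if_true, or_true,
      show 2 * m + 1 ≠ 0 by omega, show 2 * m + 1 ≠ 2 * m + 2 by omega, or_self, if_false]
    linarith
  rw [vertexAngle, vertexAngle, if_neg (by omega), if_neg (by omega), lineAngle, lineAngle]
  rcases Nat.even_or_odd k with he | ho
  · simp only [Nat.not_odd_iff_even.mpr he, he.add_one, decide_true, decide_false, if_true,
      Bool.false_eq_true, if_false]
    exact hγ0.ne'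
  · simp only [ho, Nat.not_odd_iff_even.mpr ho.add_one, decide_true, decide_false, if_true,
      Bool.false_eq_true, if_false]
    exact hγ0.ne

/-- The `k`-th vertex of the path whose unfolding runs along the line
`{x | x 0 = R sin (ψ - mγ)}`. -/
def chordVertex (m : ℕ) (γ R ψ : ℝ) (k : ℕ) : E2 :=
  (R * sin (ψ - m * γ) / cos (unfoldedAngle m γ ψ k)) • angleVec (vertexAngle m γ ψ k)

lemma cos_unfoldedAngle_endpoint (m : ℕ) (γ ψ : ℝ) {k : ℕ} (hk : k = 0 ∨ k = 2 * m + 2) :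
    cos (unfoldedAngle m γ ψ k) = sin (ψ - m * γ) := by
  rw [← cos_pi_div_two_sub]
  rcases hk with rfl | rfl
  · simp only [unfoldedAngle, if_true]; ring_nf
  · rw [← cos_neg]
    simp only [unfoldedAngle, show 2 * m + 2 ≠ 0 by omega, if_true, if_false]; ring_nf

lemma chordVertex_endpoint {m : ℕ} {γ R ψ : ℝ} (hsin : sin (ψ - m * γ) ≠ 0) {k : ℕ}
    (hk : k = 0 ∨ k = 2 * m + 2) : chordVertex m γ R ψ k = R • angleVec (π / 2 - ψ) := by
  rw [chordVertex, cos_unfoldedAngle_endpoint m γ ψ hk, mul_div_cancel_right₀ _ hsin,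
    vertexAngle, if_pos hk]

lemma unfoldMap_chordVertex_sub {m : ℕ} {γ R ψ : ℝ} (hγ0 : 0 < γ) (hψ2 : ψ < π / 2)
    (hmγ : m * γ < ψ) {k : ℕ} (hk : k ≤ 2 * m + 1) :
    unfoldMap m γ k (chordVertex m γ R ψ (k + 1) - chordVertex m γ R ψ k) =
      pt 0 (R * sin (ψ - m * γ) *
        (tan (unfoldedAngle m γ ψ (k + 1)) - tan (unfoldedAngle m γ ψ k))) := by
  have hcos : ∀ j ≤ 2 * m + 2, cos (unfoldedAngle m γ ψ j) ≠ 0 := fun j hj =>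
    (cos_pos_of_mem_Ioo (unfoldedAngle_mem_Ioo hγ0 hψ2 hmγ hj)).ne'
  rw [unfoldMap_sub_eq (r := fun j => R * sin (ψ - m * γ) / cos (unfoldedAngle m γ ψ j))
      (q := chordVertex m γ R ψ) (fun j _ => rfl) hk, div_cos_smul_angleVec (hcos _ (by omega)),
    div_cos_smul_angleVec (hcos _ (by omega))]
  ext <;> simp; ring

lemma tan_unfoldedAngle_succ_lt {m : ℕ} {γ ψ : ℝ} (hγ0 : 0 < γ) (hγ1 : γ < π / 2)
    (hψ1 : π / 2 - γ < ψ) (hψ2 : ψ < π / 2) (hmγ : m * γ < ψ) {k : ℕ} (hk : k ≤ 2 * m + 1) :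
    tan (unfoldedAngle m γ ψ (k + 1)) < tan (unfoldedAngle m γ ψ k) :=
  tan_lt_tan_of_lt_of_lt_pi_div_two (unfoldedAngle_mem_Ioo hγ0 hψ2 hmγ (by omega)).1
    (unfoldedAngle_mem_Ioo hγ0 hψ2 hmγ (by omega)).2
    (by linarith [(unfoldedAngle_succ_sub_mem hγ0 hγ1 hψ1 hψ2 hk).2])

/-- Folding back the chord: all unfolded segments point down, so the law of reflection holds. -/
theorem exists_closedBounce_horiz_one_eq_true {m : ℕ} {γ R ψ : ℝ} (hγ0 : 0 < γ)
    (hγ1 : γ < π / 2) (hR : 0 < R) (hψ1 : π / 2 - γ < ψ) (hψ2 : ψ < π / 2) (hmγ : m * γ < ψ) :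
    ∃ P : ClosedBounce γ (R • angleVec (π / 2 - ψ)) (2 * m + 1), P.horiz 1 = true := by
  set q := chordVertex m γ R ψ with hq
  have hc : 0 < R * sin (ψ - m * γ) := mul_pos hR (sin_pos_of_pos_of_lt_pi (by linarith)
    (by nlinarith [pi_pos, (by positivity : (0 : ℝ) ≤ m * γ)]))
  have hsin : sin (ψ - m * γ) ≠ 0 := fun h => hc.ne' (by rw [h, mul_zero])
  have hr : ∀ k ≤ 2 * m + 2, 0 < R * sin (ψ - m * γ) / cos (unfoldedAngle m γ ψ k) :=
    fun k hk => div_pos hc (cos_pos_of_mem_Ioo (unfoldedAngle_mem_Ioo hγ0 hψ2 hmγ hk))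
  have hsub : ∀ k ≤ 2 * m + 1, ∃ y < 0, unfoldMap m γ k (q (k + 1) - q k) = pt 0 y :=
    fun k hk => ⟨_, mul_neg_of_pos_of_neg hc (sub_neg.mpr
      (tan_unfoldedAngle_succ_lt hγ0 hγ1 hψ1 hψ2 hmγ hk)), unfoldMap_chordVertex_sub hγ0 hψ2 hmγ hk⟩
  have hdir : ∀ k ≤ 2 * m + 1, ‖unfoldMap m γ k (q (k + 1) - q k)‖⁻¹ •
      unfoldMap m γ k (q (k + 1) - q k) = pt 0 (-1) := by
    intro k hk
    obtain ⟨y, hy, hyq⟩ := hsub k hk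
    rw [hyq]
    ext <;> simp [E2.norm_eq, Real.sqrt_sq_eq_abs, abs_of_neg hy, hy.ne]
  have hcosγ : cos γ ≠ 0 := (cos_pos_of_mem_Ioo ⟨by linarith, hγ1⟩).ne'
  refine ⟨{ q := q, horiz := fun k => decide (Odd k),
            alt := fun k _ _ => by simp only [Nat.odd_add_one, decide_not]
            start := chordVertex_endpoint hsin (Or.inl rfl)
            closes := chordVertex_endpoint hsin (Or.inr rfl)
            distinct := fun k hk h => by
              obtain ⟨y, hy, hyq⟩ := hsub k hk
              rw [h, sub_self, map_zero] at hyq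
              exact hy.ne (congrArg (· 1) hyq).symm
            bounce_ne_vertex := fun k h1 h2 h => by
              have h' := congrArg norm h
              rw [hq, chordVertex, norm_smul_angleVec, abs_of_pos (hr k (by omega)),
                norm_zero] at h'
              exact (hr k (by omega)).ne' h'
            onLine := fun k h1 h2 => (onBoundary_iff hcosγ).mpr
              ⟨_, by rw [hq, chordVertex, vertexAngle, if_neg (by omega)]⟩
            segs_in_wedge := fun k hk t ht0 ht1 =>
              segment_mem_wedge hγ0 hγ1 (hr k (by omega)) (hr (k + 1) (by omega))
                (vertexAngle_mem_Icc hγ0 hψ1 hψ2 k) (vertexAngle_mem_Icc hγ0 hψ1 hψ2 (k + 1))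
                (vertexAngle_succ_ne hγ0 hψ2 hk) ⟨ht0, ht1⟩
            reflects := fun k h1 h2 => by
              obtain ⟨j, rfl⟩ : ∃ j, k = j + 1 := ⟨k - 1, by omega⟩
              rw [Nat.add_sub_cancel]
              exact (reflects_iff_unfoldMap m γ q j).mpr
                (by rw [hdir (j + 1) h2, hdir j (by omega)]) }, by simp⟩

theorem exists_closedBounce_horiz_one_eq_true_iff {m : ℕ} (hm : 1 ≤ m) {γ R ψ : ℝ}
    (hγ0 : 0 < γ) (hγ1 : γ < π / 2) (hR : 0 < R) (hψ1 : π / 2 - γ < ψ) (hψ2 : ψ < π / 2) :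
    (∃ P : ClosedBounce γ (R • angleVec (π / 2 - ψ)) (2 * m + 1), P.horiz 1 = true) ↔
      γ < π / (2 * m) ∧ m * γ < ψ := by
  constructor
  · rintro ⟨P, h1⟩
    have h := P.lt_of_horiz_one_eq_true hγ0 hγ1 hR hψ1 hψ2 h1
    refine ⟨?_, h⟩
    have hm' : (1 : ℝ) ≤ m := by exact_mod_cast hm
    rw [lt_div_iff₀ (by positivity)]
    linarith
  · rintro ⟨-, h⟩
    exact exists_closedBounce_horiz_one_eq_true hγ0 hγ1 hR hψ1 hψ2 h

/-- Let `m ≥ 1`, `γ ∈ (0, π/2)` and `p = (R sin ψ, R cos ψ)` a point of the wedge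
`W_γ` with `R > 0` and `π/2 − γ < ψ < π/2`.  There is a closed `(2m+1)`-bounce
billiard path based at `p` whose first bounce is on the horizontal line `ℓ₀` iff
`γ < π/(2m)` and `ψ > mγ`; and there is one whose first bounce is on `ℓ_γ` iff
`γ < π/(2m)` and `ψ < π − (m+1)γ`. -/
theorem exists_closed_odd_bounce_iff (m : ℕ) (hm : 1 ≤ m) (γ : ℝ)
    (hγ0 : 0 < γ) (hγ1 : γ < π / 2)
    (R ψ : ℝ) (hR : 0 < R) (hψ1 : π / 2 - γ < ψ) (hψ2 : ψ < π / 2)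
    (p : E2) (hp : p = pt (R * Real.sin ψ) (R * Real.cos ψ)) :
    ((∃ P : ClosedBounce γ p (2 * m + 1), P.horiz 1 = true) ↔
      (γ < π / (2 * m) ∧ (m : ℝ) * γ < ψ)) ∧
    ((∃ P : ClosedBounce γ p (2 * m + 1), P.horiz 1 = false) ↔
      (γ < π / (2 * m) ∧ ψ < π - (m + 1 : ℝ) * γ)) := by
  subst hp
  rw [pt_sin_cos, exists_horiz_false_iff hγ0 hγ1, map_smul, mirror_angleVec,
    show 2 * (γ / 2) - (π / 2 - ψ) = π / 2 - (π - γ - ψ) by ring,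
    exists_closedBounce_horiz_one_eq_true_iff hm hγ0 hγ1 hR hψ1 hψ2,
    exists_closedBounce_horiz_one_eq_true_iff hm hγ0 hγ1 hR (by linarith) (by linarith)]
  exact ⟨Iff.rfl, and_congr_right fun _ => by constructor <;> intro h <;> linarith⟩

end
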